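/- arXiv:1908.09538 — 3 statements merged into one kernel-verified Lean document; each statement's English description precedes it below -/
import Mathlib

section
/- Under the compatibility condition r/⟨r⟩ₐ + ⟨d⟩ₕ/d = 2, for every positive C¹ L-periodic function φ with ∫₀ᴸ φ² dx = 1 and with λ₀ = √(⟨r⟩ₐ/⟨d⟩ₕ), the inequality I(φ; λ₀, d, r) ≥ −2⟨r⟩ₐ holds, where I(φ; λ, d, r) = ∫₀ᴸ d|φ'|² dx − ∫₀ᴸ r φ² dx − λ²L²/∫₀ᴸ 1/(dφ²) dx. -/
/-!
Substituting the compatibility condition gives `∫ r φ² = 2⟨r⟩ₐ - ⟨r⟩ₐ⟨d⟩ₕ ∫ φ²/d`, while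
`λ₀²L² = ⟨r⟩ₐ⟨d⟩ₕ (∫ 1/d)²`. Cauchy–Schwarz, `(∫ 1/d)² ≤ (∫ φ²/d)(∫ 1/(dφ²))`, then bounds the
nonlocal term by `⟨r⟩ₐ⟨d⟩ₕ ∫ φ²/d`, which cancels, and the gradient term is nonnegative.
-/

open MeasureTheory Real

/-- Cauchy–Schwarz with `h` in the role of `√f √g`, so that no square roots appear. -/
theorem sq_integral_le_integral_mul_integral {α : Type*} [MeasurableSpace α] {μ : Measure α}
    {f g h : α → ℝ} (hf : Integrable f μ) (hg : Integrable g μ) (hh : Integrable h μ)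
    (hf_nonneg : 0 ≤ᵐ[μ] f) (hg_nonneg : 0 ≤ᵐ[μ] g) (hfgh : ∀ᵐ x ∂μ, h x ^ 2 ≤ f x * g x) :
    (∫ x, h x ∂μ) ^ 2 ≤ (∫ x, f x ∂μ) * ∫ x, g x ∂μ := by
  have hquad : ∀ t : ℝ,
      0 ≤ (∫ x, f x ∂μ) * (t * t) + (-2 * ∫ x, h x ∂μ) * t + ∫ x, g x ∂μ := by
    intro t
    have hexpand : (∫ x, f x ∂μ) * (t * t) + (-2 * ∫ x, h x ∂μ) * t + ∫ x, g x ∂μ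
        = ∫ x, t * t * f x - 2 * t * h x + g x ∂μ := by
      have hdiff : Integrable (fun x ↦ t * t * f x - 2 * t * h x) μ :=
        (hf.const_mul _).sub (hh.const_mul _)
      rw [integral_add hdiff hg, integral_sub (hf.const_mul _) (hh.const_mul _),
        integral_const_mul, integral_const_mul]
      ring
    rw [hexpand]
    refine integral_nonneg_of_ae ?_
    filter_upwards [hf_nonneg, hg_nonneg, hfgh] with x hfx hgx hfghx
    simp only [Pi.zero_apply] at hfx hgx ⊢
    have hsum_nonneg : 0 ≤ t * t * f x + g x := add_nonneg (mul_nonneg (mul_self_nonneg t) hfx) hgx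
    have hsq : (2 * t * h x) ^ 2 ≤ (t * t * f x + g x) ^ 2 := by
      nlinarith [sq_nonneg (t * t * f x - g x), sq_nonneg t]
    linarith [le_abs_self (2 * t * h x), abs_le_of_sq_le_sq hsq hsum_nonneg]
  have hdiscrim := discrim_le_zero hquad
  rw [discrim] at hdiscrim
  linarith

theorem sq_integral_inv_le_integral_sq_div_mul_integral_inv {a b : ℝ} (hab : a ≤ b)
    {d φ : ℝ → ℝ} (hd : Continuous d) (hd_pos : ∀ x, 0 < d x) (hφ : Continuous φ)
    (hφ_ne : ∀ x, φ x ≠ 0) :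
    (∫ x in a..b, 1 / d x) ^ 2
      ≤ (∫ x in a..b, φ x ^ 2 / d x) * ∫ x in a..b, 1 / (d x * φ x ^ 2) := by
  have hd_ne x : d x ≠ 0 := (hd_pos x).ne'
  simp only [intervalIntegral.integral_of_le hab]
  refine sq_integral_le_integral_mul_integral
    (((hφ.pow 2).div hd hd_ne).integrableOn_Ioc)
    ((continuous_const.div (hd.mul (hφ.pow 2))
      fun x ↦ mul_ne_zero (hd_ne x) (pow_ne_zero 2 (hφ_ne x))).integrableOn_Ioc)
    ((continuous_const.div hd hd_ne).integrableOn_Ioc)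
    (ae_of_all _ fun x ↦ div_nonneg (sq_nonneg _) (hd_pos x).le)
    (ae_of_all _ fun x ↦ div_nonneg zero_le_one (mul_nonneg (hd_pos x).le (sq_nonneg _)))
    (ae_of_all _ fun x ↦ le_of_eq ?_)
  field_simp [hd_ne x, hφ_ne x]

theorem integral_mul_two_sub_div_mul_sq {a b ρ δ : ℝ} {d φ : ℝ → ℝ} (hd : Continuous d)
    (hd_ne : ∀ x, d x ≠ 0) (hφ : Continuous φ) :
    ∫ x in a..b, ρ * (2 - δ / d x) * φ x ^ 2
      = 2 * ρ * (∫ x in a..b, φ x ^ 2) - ρ * δ * ∫ x in a..b, φ x ^ 2 / d x := by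
  have hpointwise x : ρ * (2 - δ / d x) * φ x ^ 2 = 2 * ρ * φ x ^ 2 - ρ * δ * (φ x ^ 2 / d x) := by
    ring
  simp only [hpointwise]
  rw [intervalIntegral.integral_sub, intervalIntegral.integral_const_mul,
    intervalIntegral.integral_const_mul]
  all_goals exact (by fun_prop (disch := exact hd_ne _) : Continuous _).intervalIntegrable a b

theorem functional_lower_bound_general
    (L : ℝ) (hL : 0 < L)
    (d : ℝ → ℝ) (hd_smooth : ContDiff ℝ 1 d) (hd_pos : ∀ x, 0 < d x)
    (r : ℝ → ℝ)
    (rbar dh lam0 : ℝ)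
    (hrbar_pos : 0 < rbar)
    (hdh : dh = L / ∫ x in (0:ℝ)..L, 1 / d x)
    (hcompat : ∀ x, r x = rbar * (2 - dh / d x))
    (hlam0 : lam0 = Real.sqrt (rbar / dh)) :
    ∀ φ : ℝ → ℝ, ContDiff ℝ 1 φ → (∀ x, 0 < φ x) → Function.Periodic φ L →
      (∫ x in (0:ℝ)..L, φ x ^ 2) = 1 →
      (∫ x in (0:ℝ)..L, d x * |deriv φ x| ^ 2)
        - (∫ x in (0:ℝ)..L, r x * φ x ^ 2)
        - lam0 ^ 2 * L ^ 2 / (∫ x in (0:ℝ)..L, 1 / (d x * φ x ^ 2))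
        ≥ -2 * rbar := by
  intro φ hφ hφ_pos _ hnorm
  have hd := hd_smooth.continuous
  have hd_ne x : d x ≠ 0 := (hd_pos x).ne'
  set C := ∫ x in (0:ℝ)..L, 1 / d x
  set S := ∫ x in (0:ℝ)..L, φ x ^ 2 / d x
  set T := ∫ x in (0:ℝ)..L, 1 / (d x * φ x ^ 2)
  have hC_pos : 0 < C := intervalIntegral.intervalIntegral_pos_of_pos
    ((continuous_const.div hd hd_ne).intervalIntegrable 0 L) (fun x ↦ by simp [hd_pos x]) hL
  have hT_pos : 0 < T := intervalIntegral.intervalIntegral_pos_of_pos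
    ((continuous_const.div (hd.mul (hφ.continuous.pow 2))
      fun x ↦ (mul_pos (hd_pos x) (pow_pos (hφ_pos x) 2)).ne').intervalIntegrable 0 L)
    (fun x ↦ by have := hd_pos x; have := hφ_pos x; positivity) hL
  have hL_eq : L = dh * C := by rw [hdh, div_mul_cancel₀ _ hC_pos.ne']
  have hdh_pos : 0 < dh := hdh ▸ div_pos hL hC_pos
  have hlam : lam0 ^ 2 = rbar / dh := by
    rw [hlam0, sq_sqrt (div_nonneg hrbar_pos.le hdh_pos.le)]
  have hr_int : ∫ x in (0:ℝ)..L, r x * φ x ^ 2 = 2 * rbar - rbar * dh * S := by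
    simp only [hcompat]
    rw [integral_mul_two_sub_div_mul_sq hd hd_ne hφ.continuous, hnorm, mul_one]
  have hCS : C ^ 2 ≤ S * T := sq_integral_inv_le_integral_sq_div_mul_integral_inv hL.le hd hd_pos
    hφ.continuous fun x ↦ (hφ_pos x).ne'
  have hgrad : 0 ≤ ∫ x in (0:ℝ)..L, d x * |deriv φ x| ^ 2 :=
    intervalIntegral.integral_nonneg hL.le fun x _ ↦ mul_nonneg (hd_pos x).le (sq_nonneg _)
  have hnonlocal : lam0 ^ 2 * L ^ 2 / T ≤ rbar * dh * S := by
    rw [hlam, hL_eq, div_le_iff₀ hT_pos]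
    calc rbar / dh * (dh * C) ^ 2 = rbar * dh * C ^ 2 := by field_simp
      _ ≤ rbar * dh * (S * T) := by gcongr
      _ = rbar * dh * S * T := by ring
  rw [hr_int]
  linarith

theorem functional_lower_bound
    (L : ℝ) (hL : 0 < L)
    (d : ℝ → ℝ) (hd_smooth : ContDiff ℝ 1 d) (hd_pos : ∀ x, 0 < d x)
    (hd_per : Function.Periodic d L)
    (r : ℝ → ℝ) (hr_cont : Continuous r) (hr_per : Function.Periodic r L)
    (rbar dh lam0 : ℝ)
    (hrbar : rbar = (1 / L) * ∫ x in (0:ℝ)..L, r x)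
    (hrbar_pos : 0 < rbar)
    (hdh : dh = L / ∫ x in (0:ℝ)..L, 1 / d x)
    (hcompat : ∀ x, r x = rbar * (2 - dh / d x))
    (hlam0 : lam0 = Real.sqrt (rbar / dh)) :
    ∀ φ : ℝ → ℝ, ContDiff ℝ 1 φ → (∀ x, 0 < φ x) → Function.Periodic φ L →
      (∫ x in (0:ℝ)..L, φ x ^ 2) = 1 →
      (∫ x in (0:ℝ)..L, d x * |deriv φ x| ^ 2)
        - (∫ x in (0:ℝ)..L, r x * φ x ^ 2)
        - lam0 ^ 2 * L ^ 2 / (∫ x in (0:ℝ)..L, 1 / (d x * φ x ^ 2))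
        ≥ -2 * rbar :=
  functional_lower_bound_general L hL d hd_smooth hd_pos r rbar dh lam0 hrbar_pos hdh hcompat hlam0
end

section
/- If a constant function ψ ≡ C (C ≠ 0) satisfies the eigenvalue equation −(dψ')' − 2λ₀dψ' − (λ₀²d + λ₀d' + r)ψ = −2⟨r⟩ₐ ψ on ℝ with λ₀ = √(⟨r⟩ₐ/⟨d⟩ₕ), then λ₀²d(x) + λ₀d'(x) + r(x) = 2⟨r⟩ₐ for all x, and integrating over a period yields ⟨d⟩ₐ = ⟨d⟩ₕ; hence d is constant. -/
open MeasureTheory Real Set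

/-!
Since `ψ` is constant, the eigenvalue equation collapses to the pointwise identity
`λ₀² d + λ₀ d' + r = 2⟨r⟩ₐ`. Integrating over a period kills `d'` and, as `λ₀² = ⟨r⟩ₐ / ⟨d⟩ₕ`,
leaves `(∫ d)(∫ 1/d) = L²`, i.e. `⟨d⟩ₐ = ⟨d⟩ₕ`. This is the equality case of Cauchy–Schwarz:
with `m = ⟨d⟩ₐ` the nonnegative continuous function `(d - m)² / d` then has zero integral,
so `d ≡ m`.
-/

theorem Function.Periodic.integral_deriv_eq_zero {f : ℝ → ℝ} {T : ℝ} (hf : ContDiff ℝ 1 f)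
    (hper : Function.Periodic f T) (t : ℝ) : ∫ x in t..t + T, deriv f x = 0 := by
  rw [intervalIntegral.integral_deriv_eq_sub (fun x _ => hf.differentiable one_ne_zero x)
    ((hf.continuous_deriv le_rfl).intervalIntegrable _ _), hper t, sub_self]

theorem Function.Periodic.integral_const_mul_add_const_mul_deriv_add {d r : ℝ → ℝ} {L : ℝ}
    (hd : ContDiff ℝ 1 d) (hper : Function.Periodic d L) (hr : Continuous r) (a b : ℝ) :
    ∫ x in 0..L, (a * d x + b * deriv d x + r x) =
      a * (∫ x in 0..L, d x) + ∫ x in 0..L, r x := by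
  have hd_int : IntervalIntegrable d volume 0 L := hd.continuous.intervalIntegrable _ _
  have hd'_int : IntervalIntegrable (deriv d) volume 0 L :=
    (hd.continuous_deriv le_rfl).intervalIntegrable _ _
  have hderiv : ∫ x in 0..L, deriv d x = 0 := by
    simpa using hper.integral_deriv_eq_zero hd 0
  rw [intervalIntegral.integral_add ((hd_int.const_mul a).add (hd'_int.const_mul b))
      (hr.intervalIntegrable _ _),
    intervalIntegral.integral_add (hd_int.const_mul a) (hd'_int.const_mul b),
    intervalIntegral.integral_const_mul, intervalIntegral.integral_const_mul, hderiv, mul_zero,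
    add_zero]

theorem integral_sq_sub_div_self {f : ℝ → ℝ} {a b : ℝ} (hf : Continuous f)
    (hf₀ : ∀ x, f x ≠ 0) (m : ℝ) :
    ∫ x in a..b, (f x - m) ^ 2 / f x =
      (∫ x in a..b, f x) - 2 * m * (b - a) + m ^ 2 * ∫ x in a..b, 1 / f x := by
  have hexpand : ∀ x, (f x - m) ^ 2 / f x = f x - 2 * m + m ^ 2 * (1 / f x) := by
    intro x
    field_simp [hf₀ x]
    ring
  have hinv : Continuous fun x => 1 / f x := continuous_const.div hf hf₀
  simp_rw [hexpand]
  rw [intervalIntegral.integral_add ((hf.intervalIntegrable _ _).sub intervalIntegrable_const)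
      ((hinv.intervalIntegrable _ _).const_mul _),
    intervalIntegral.integral_sub (hf.intervalIntegrable _ _) intervalIntegrable_const,
    intervalIntegral.integral_const, intervalIntegral.integral_const_mul, smul_eq_mul]
  ring

theorem eqOn_Ioc_of_integral_mul_integral_inv_eq_sq {f : ℝ → ℝ} {a b : ℝ} (hab : a < b)
    (hf : Continuous f) (hf_pos : ∀ x, 0 < f x)
    (h : (∫ x in a..b, f x) * (∫ x in a..b, 1 / f x) = (b - a) ^ 2) :
    EqOn f (fun _ => (∫ x in a..b, f x) / (b - a)) (Ioc a b) := by
  set m := (∫ x in a..b, f x) / (b - a)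
  have hf₀ : ∀ x, f x ≠ 0 := fun x => (hf_pos x).ne'
  have hg : Continuous fun x => (f x - m) ^ 2 / f x :=
    ((hf.sub continuous_const).pow 2).div hf hf₀
  have hg_int : ∫ x in a..b, (f x - m) ^ 2 / f x = 0 := by
    rw [integral_sq_sub_div_self hf hf₀]
    have hba : b - a ≠ 0 := sub_ne_zero.2 hab.ne'
    simp only [m]
    field_simp
    linear_combination (∫ x in a..b, f x) * h
  have hg_zero : EqOn (fun x => (f x - m) ^ 2 / f x) 0 (Ioc a b) := by
    refine Measure.eqOn_Ioc_of_ae_eq volume ?_ hg.continuousOn continuousOn_const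
    rwa [← intervalIntegral.integral_eq_zero_iff_of_le_of_nonneg_ae hab.le
      (ae_of_all _ fun x => div_nonneg (sq_nonneg _) (hf_pos x).le) (hg.intervalIntegrable _ _)]
  intro x hx
  have := hg_zero hx
  simp only [Pi.zero_apply, div_eq_zero_iff, hf₀ x, or_false, sq_eq_zero_iff, sub_eq_zero] at this
  exact this

theorem Function.Periodic.eq_of_eqOn_Ioc {f : ℝ → ℝ} {T : ℝ} (hper : Function.Periodic f T)
    (hT : 0 < T) {a c : ℝ} (h : EqOn f (fun _ => c) (Ioc a (a + T))) (x : ℝ) : f x = c := by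
  obtain ⟨y, hy, hxy⟩ := hper.exists_mem_Ioc hT x a
  exact hxy.trans (h hy)

theorem constant_eigenfunction_forces_constant_diffusion_general
    (L : ℝ) (hL : 0 < L)
    (d : ℝ → ℝ) (hd_smooth : ContDiff ℝ 1 d) (hd_pos : ∀ x, 0 < d x)
    (hd_per : Function.Periodic d L)
    (r : ℝ → ℝ) (hr_cont : Continuous r)
    (rbar dbar dh lam0 : ℝ)
    (hrbar : rbar = (1 / L) * ∫ x in (0:ℝ)..L, r x)
    (hrbar_pos : 0 < rbar)
    (hdbar : dbar = (1 / L) * ∫ x in (0:ℝ)..L, d x)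
    (hdh : dh = L / ∫ x in (0:ℝ)..L, 1 / d x)
    (hlam0 : lam0 = Real.sqrt (rbar / dh))
    (C : ℝ) (hC : C ≠ 0) (ψ : ℝ → ℝ) (hψ : ψ = fun _ => C)
    (heigen : ∀ x, -(deriv (fun y => d y * deriv ψ y) x)
        - 2 * lam0 * d x * deriv ψ x
        - (lam0 ^ 2 * d x + lam0 * deriv d x + r x) * ψ x
        = -2 * rbar * ψ x) :
    (∀ x, lam0 ^ 2 * d x + lam0 * deriv d x + r x = 2 * rbar) ∧
      dbar = dh ∧ ∃ c : ℝ, ∀ x, d x = c := by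
  subst hψ
  have hpointwise : ∀ x, lam0 ^ 2 * d x + lam0 * deriv d x + r x = 2 * rbar := fun x =>
    mul_right_cancel₀ hC (by simpa using heigen x)
  set I := ∫ x in (0:ℝ)..L, d x
  set J := ∫ x in (0:ℝ)..L, 1 / d x
  have hJ : 0 < J := intervalIntegral.intervalIntegral_pos_of_pos_on
    ((continuous_const.div hd_smooth.continuous fun x => (hd_pos x).ne').intervalIntegrable _ _)
    (fun x _ => one_div_pos.2 (hd_pos x)) hL
  have hlam0_sq : lam0 ^ 2 = rbar * J / L := by
    rw [hlam0, sq_sqrt (by rw [hdh]; positivity), hdh]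
    field_simp
  have hr_int : ∫ x in (0:ℝ)..L, r x = rbar * L := by
    rw [hrbar]
    field_simp
  have hintegrated : lam0 ^ 2 * I = rbar * L := by
    have h := intervalIntegral.integral_congr (μ := volume) (a := 0) (b := L)
      fun x _ => hpointwise x
    rw [hd_per.integral_const_mul_add_const_mul_deriv_add hd_smooth hr_cont, hr_int,
      intervalIntegral.integral_const, smul_eq_mul] at h
    linarith
  have hIJ : I * J = L ^ 2 := by
    rw [hlam0_sq] at hintegrated
    field_simp at hintegrated
    linear_combination hintegrated
  refine ⟨hpointwise, by rw [hdbar, hdh]; field_simp; linarith, I / L, fun x => ?_⟩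
  refine hd_per.eq_of_eqOn_Ioc hL (a := 0) ?_ x
  simpa using eqOn_Ioc_of_integral_mul_integral_inv_eq_sq hL hd_smooth.continuous hd_pos
    (by rwa [sub_zero])

theorem constant_eigenfunction_forces_constant_diffusion
    (L : ℝ) (hL : 0 < L)
    (d : ℝ → ℝ) (hd_smooth : ContDiff ℝ 1 d) (hd_pos : ∀ x, 0 < d x)
    (hd_per : Function.Periodic d L) (hd'_per : Function.Periodic (deriv d) L)
    (r : ℝ → ℝ) (hr_cont : Continuous r) (hr_per : Function.Periodic r L)
    (rbar dbar dh lam0 : ℝ)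
    (hrbar : rbar = (1 / L) * ∫ x in (0:ℝ)..L, r x)
    (hrbar_pos : 0 < rbar)
    (hdbar : dbar = (1 / L) * ∫ x in (0:ℝ)..L, d x)
    (hdh : dh = L / ∫ x in (0:ℝ)..L, 1 / d x)
    (hlam0 : lam0 = Real.sqrt (rbar / dh))
    (C : ℝ) (hC : C ≠ 0) (ψ : ℝ → ℝ) (hψ : ψ = fun _ => C)
    (heigen : ∀ x, -(deriv (fun y => d y * deriv ψ y) x)
        - 2 * lam0 * d x * deriv ψ x
        - (lam0 ^ 2 * d x + lam0 * deriv d x + r x) * ψ x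
        = -2 * rbar * ψ x) :
    (∀ x, lam0 ^ 2 * d x + lam0 * deriv d x + r x = 2 * rbar) ∧
      dbar = dh ∧ ∃ c : ℝ, ∀ x, d x = c :=
  constant_eigenfunction_forces_constant_diffusion_general L hL d hd_smooth hd_pos hd_per r hr_cont
    rbar dbar dh lam0 hrbar hrbar_pos hdbar hdh hlam0 C hC ψ hψ heigen
end

section
/- Weak Euler–Lagrange equation at the constant function: suppose the constant φ₀ ≡ 1/√L minimizes the functional I(φ) = (∫₀ᴸφ²dx)^{-1}[∫₀ᴸ d|φ'|²dx − ∫₀ᴸ rφ²dx − λ₀²L²/∫₀ᴸ 1/(dφ²) dx] over positive C¹ L-periodic φ, where λ₀ = √(⟨r⟩ₐ/⟨d⟩ₕ). Then for every C¹ L-periodic test function ψ: −∫₀ᴸ (1/√L) r ψ dx − (λ₀² L²/(∫₀ᴸ(L/d)dx)²) ∫₀ᴸ (L√L/d) ψ dx = I(φ₀) ∫₀ᴸ (1/√L) ψ dx, which simplifies pointwise to r(x)/⟨r⟩ₐ + ⟨d⟩ₕ/d(x) = 2 for all x. -/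
/-!
For a periodic C¹ direction ψ, the function φ₀ + εψ stays positive, C¹ and L-periodic for small ε,
so ε ↦ I(φ₀ + εψ) has a local minimum at 0 and its derivative, the first variation, vanishes.
Three of the four integrals in I are quadratic polynomials in ε; the reciprocal one is
differentiated under the integral sign, `φ₀ + εψ` being bounded away from 0 uniformly. At a
constant the first variation is explicit, and since I(φ₀) = -2⟨r⟩ₐ it says that
∫ (2⟨r⟩ₐ - r - ⟨r⟩ₐ⟨d⟩ₕ/d) ψ = 0 for every periodic C¹ ψ. Testing against smooth periodic bumps
concentrated near a point gives the pointwise identity.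
-/

open MeasureTheory Real Function Set Filter Topology
open scoped Interval ContDiff

theorem eventually_forall_abs_mul_le {α : Type*} {s : Set α} {v : α → ℝ} {B δ : ℝ}
    (hv : ∀ x ∈ s, |v x| ≤ B) (hδ : 0 < δ) :
    ∀ᶠ ε in 𝓝 (0 : ℝ), ∀ x ∈ s, |ε * v x| ≤ δ := by
  have hsmall : ∀ᶠ ε in 𝓝 (0 : ℝ), |ε| * B < δ :=
    ((continuous_abs.mul continuous_const).tendsto' 0 0 (by simp)).eventually (gt_mem_nhds hδ)
  filter_upwards [hsmall] with ε hε x hx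
  rw [abs_mul]
  exact (mul_le_mul_of_nonneg_left (hv x hx) (abs_nonneg ε)).trans hε.le

theorem hasDerivAt_integral_mul_add_mul_sq {a b : ℝ} {f u v : ℝ → ℝ}
    (hf : ContinuousOn f (uIcc a b)) (hu : ContinuousOn u (uIcc a b))
    (hv : ContinuousOn v (uIcc a b)) :
    HasDerivAt (fun ε => ∫ x in a..b, f x * (u x + ε * v x) ^ 2)
      (2 * ∫ x in a..b, f x * u x * v x) 0 := by
  have i₀ : IntervalIntegrable (fun x => f x * u x ^ 2) volume a b :=
    (hf.mul (hu.pow 2)).intervalIntegrable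
  have i₁ : IntervalIntegrable (fun x => 2 * (f x * u x * v x)) volume a b :=
    ((hf.mul hu).mul hv).intervalIntegrable.const_mul 2
  have i₂ : IntervalIntegrable (fun x => f x * v x ^ 2) volume a b :=
    (hf.mul (hv.pow 2)).intervalIntegrable
  have expand : ∀ ε : ℝ, ∫ x in a..b, f x * (u x + ε * v x) ^ 2 =
      (∫ x in a..b, f x * u x ^ 2) + ε * (2 * ∫ x in a..b, f x * u x * v x)
        + ε ^ 2 * ∫ x in a..b, f x * v x ^ 2 := fun ε => by
    have pointwise : ∀ x, f x * (u x + ε * v x) ^ 2 = f x * u x ^ 2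
        + ε * (2 * (f x * u x * v x)) + ε ^ 2 * (f x * v x ^ 2) := fun x => by ring
    simp_rw [pointwise]
    rw [intervalIntegral.integral_add (i₀.add (i₁.const_mul ε)) (i₂.const_mul _),
      intervalIntegral.integral_add i₀ (i₁.const_mul ε), intervalIntegral.integral_const_mul,
      intervalIntegral.integral_const_mul, intervalIntegral.integral_const_mul]
  have h := (((hasDerivAt_id (0 : ℝ)).mul_const (2 * ∫ x in a..b, f x * u x * v x)).fun_add
    ((hasDerivAt_pow 2 (0 : ℝ)).mul_const (∫ x in a..b, f x * v x ^ 2))).const_add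
    (∫ x in a..b, f x * u x ^ 2)
  refine (h.congr_deriv (by simp)).congr_of_eventuallyEq (Eventually.of_forall fun ε => ?_)
  simp only [expand, id]
  ring

theorem IsCompact.exists_pos_eventually_le_abs_add_mul {s : Set ℝ} (hs : IsCompact s)
    (hne : s.Nonempty) {u v : ℝ → ℝ} (hu : ContinuousOn u s) (hv : ContinuousOn v s)
    (hu0 : ∀ x ∈ s, u x ≠ 0) :
    ∃ m > 0, ∀ᶠ ε in 𝓝 (0 : ℝ), ∀ x ∈ s, m ≤ |u x + ε * v x| := by
  obtain ⟨x₀, hx₀, hmin⟩ := hs.exists_isMinOn hne hu.abs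
  obtain ⟨B, hB⟩ := hs.exists_bound_of_continuousOn hv
  refine ⟨|u x₀| / 2, half_pos (abs_pos.mpr (hu0 x₀ hx₀)), ?_⟩
  filter_upwards [eventually_forall_abs_mul_le hB (half_pos (abs_pos.mpr (hu0 x₀ hx₀)))]
    with ε hε x hx
  have hux : |u x₀| ≤ |u x| := hmin hx
  linarith [abs_sub_abs_le_abs_add (u x) (ε * v x), hε x hx]

theorem hasDerivAt_div_add_mul_sq {c a b ε : ℝ} (h : a + ε * b ≠ 0) :
    HasDerivAt (fun e => c / (a + e * b) ^ 2) (-2 * (c * b / (a + ε * b) ^ 3)) ε := by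
  have hlin : HasDerivAt (fun e => a + e * b) b ε := by
    simpa using ((hasDerivAt_id ε).mul_const b).const_add a
  refine ((hasDerivAt_const ε c).div (hlin.fun_pow 2) (pow_ne_zero 2 h)).congr_deriv ?_
  field_simp
  ring

theorem hasDerivAt_integral_div_add_mul_sq {a b : ℝ} {f u v : ℝ → ℝ}
    (hf : ContinuousOn f (uIcc a b)) (hu : ContinuousOn u (uIcc a b))
    (hv : ContinuousOn v (uIcc a b)) (hu0 : ∀ x ∈ uIcc a b, u x ≠ 0) :
    HasDerivAt (fun ε => ∫ x in a..b, f x / (u x + ε * v x) ^ 2)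
      (-2 * ∫ x in a..b, f x * v x / u x ^ 3) 0 := by
  obtain ⟨m, hm, hs⟩ :=
    isCompact_uIcc.exists_pos_eventually_le_abs_add_mul nonempty_uIcc hu hv hu0
  obtain ⟨Bf, hBf⟩ := isCompact_uIcc.exists_bound_of_continuousOn hf
  obtain ⟨Bv, hBv⟩ := isCompact_uIcc.exists_bound_of_continuousOn hv
  have hmeas : ∀ g : ℝ → ℝ, ContinuousOn g (uIcc a b) →
      AEStronglyMeasurable g (volume.restrict (Ι a b)) := fun g hg =>
    (hg.mono uIoc_subset_uIcc).aestronglyMeasurable measurableSet_uIoc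
  have hne : ∀ ε ∈ {ε : ℝ | ∀ x ∈ uIcc a b, m ≤ |u x + ε * v x|}, ∀ k : ℕ,
      ∀ x ∈ uIcc a b, (u x + ε * v x) ^ k ≠ 0 := fun ε hε k x hx =>
    pow_ne_zero k (abs_pos.mp (hm.trans_le (hε x hx)))
  have hpow : ∀ (ε : ℝ) (k : ℕ), ContinuousOn (fun x => (u x + ε * v x) ^ k) (uIcc a b) :=
    fun ε k => (hu.add (continuousOn_const.mul hv)).pow k
  have h0 := mem_of_mem_nhds hs
  have key := intervalIntegral.hasDerivAt_integral_of_dominated_loc_of_deriv_le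
    (F := fun ε x => f x / (u x + ε * v x) ^ 2)
    (F' := fun ε x => -2 * (f x * v x / (u x + ε * v x) ^ 3))
    (bound := fun _ => 2 * (Bf * Bv / m ^ 3)) hs
    (Filter.mem_of_superset hs fun ε hε => hmeas _ (hf.div (hpow ε 2) (hne ε hε 2)))
    (hf.div (hpow 0 2) (hne 0 h0 2)).intervalIntegrable
    (hmeas _ (continuousOn_const.mul ((hf.mul hv).div (hpow 0 3) (hne 0 h0 3))))
    (ae_of_all _ fun x hx ε hε => ?_) intervalIntegrable_const
    (ae_of_all _ fun x hx ε hε =>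
      hasDerivAt_div_add_mul_sq (by simpa using hne ε hε 1 x (uIoc_subset_uIcc hx)))
  · simpa only [zero_mul, add_zero, intervalIntegral.integral_const_mul] using key.2
  have hx' := uIoc_subset_uIcc hx
  have hw : m ≤ |u x + ε * v x| := hε x hx'
  have hfx := hBf x hx'
  have hvx := hBv x hx'
  have hBf_nonneg : 0 ≤ Bf := (norm_nonneg _).trans hfx
  have hB_nonneg : 0 ≤ Bf * Bv := mul_nonneg hBf_nonneg ((norm_nonneg _).trans hvx)
  calc ‖-2 * (f x * v x / (u x + ε * v x) ^ 3)‖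
      = 2 * (‖f x‖ * ‖v x‖ / |u x + ε * v x| ^ 3) := by simp [norm_mul, norm_div, norm_pow]
    _ ≤ 2 * (Bf * Bv / m ^ 3) := by gcongr

theorem Function.Periodic.exists_pos_forall_le {L : ℝ} {φ : ℝ → ℝ} (hper : Periodic φ L)
    (hL : L ≠ 0) (hφ : Continuous φ) (hpos : ∀ x, 0 < φ x) : ∃ m > 0, ∀ x, m ≤ φ x := by
  obtain ⟨_, ⟨x₀, rfl⟩, hleast⟩ :=
    (hper.compact_of_continuous hL hφ).exists_isLeast (range_nonempty φ)
  exact ⟨φ x₀, hpos x₀, fun x => hleast ⟨x, rfl⟩⟩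

theorem exists_periodic_bump {L : ℝ} (hL : 0 < L) (x₀ : ℝ) {δ : ℝ} (hδ : 0 < δ)
    (hδL : δ ≤ L / 2) :
    ∃ ψ : ℝ → ℝ, ContDiff ℝ ∞ ψ ∧ Periodic ψ L ∧ (∀ x, 0 ≤ ψ x) ∧ 0 < ψ x₀ ∧
      ∀ x ∈ Icc (x₀ - L / 2) (x₀ + L / 2), 0 < ψ x → |x - x₀| < δ := by
  set k := 2 * π / L
  have hk : 0 < k := by positivity
  have hkL : k * L = 2 * π := div_mul_cancel₀ _ hL.ne'
  have hkδ : k * δ ∈ Icc 0 π := ⟨by positivity, by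
    calc k * δ ≤ k * (L / 2) := by gcongr
      _ = π := by linear_combination hkL / 2⟩
  refine ⟨fun x => smoothTransition (cos (k * (x - x₀)) - cos (k * δ)),
    smoothTransition.contDiff.comp
      (((contDiff_const.mul (contDiff_id.sub contDiff_const)).cos).sub contDiff_const),
    fun x => ?_, fun x => smoothTransition.nonneg _, ?_, fun x hx hpos => ?_⟩
  · have : k * (x + L - x₀) = k * (x - x₀) + 2 * π := by linear_combination hkL
    simp only [this, cos_add_two_pi]
  · refine smoothTransition.pos_of_pos (sub_pos.mpr ?_)
    simpa using cos_lt_cos_of_nonneg_of_le_pi le_rfl hkδ.2 (by positivity)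
  · have hcos : cos (k * δ) < cos |k * (x - x₀)| := by
      rw [cos_abs]
      by_contra! h
      exact hpos.ne' (smoothTransition.zero_of_nonpos (sub_nonpos.mpr h))
    have hθ : |k * (x - x₀)| ∈ Icc 0 π := ⟨abs_nonneg _, by
      rw [abs_mul, abs_of_pos hk]
      calc k * |x - x₀| ≤ k * (L / 2) := by
            gcongr
            exact abs_sub_le_iff.mpr ⟨by linarith [hx.2], by linarith [hx.1]⟩
        _ = π := by linear_combination hkL / 2⟩
    have := (strictAntiOn_cos.lt_iff_gt hkδ hθ).mp hcos
    rw [abs_mul, abs_of_pos hk] at this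
    exact lt_of_mul_lt_mul_left this hk.le

theorem Function.Periodic.eq_zero_of_forall_integral_mul_eq_zero {L : ℝ} (hL : 0 < L)
    {g : ℝ → ℝ} (hg : Continuous g) (hper : Periodic g L)
    (horth : ∀ ψ : ℝ → ℝ, ContDiff ℝ 1 ψ → Periodic ψ L → ∫ x in (0 : ℝ)..L, g x * ψ x = 0)
    (x₀ : ℝ) : g x₀ = 0 := by
  wlog hpos : 0 < g x₀ generalizing g
  · rcases (not_lt.mp hpos).lt_or_eq with hneg | h
    · simpa using this hg.neg (fun x => by simp [hper x]) (fun ψ hψ hψper => by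
        simp [neg_mul, intervalIntegral.integral_neg, horth ψ hψ hψper]) (neg_pos.mpr hneg)
    · exact h
  exfalso
  obtain ⟨δ, hδ, hball⟩ := Metric.eventually_nhds_iff.mp
    (hg.continuousAt.eventually (lt_mem_nhds hpos))
  have hδ' : 0 < min δ (L / 2) := lt_min hδ (half_pos hL)
  obtain ⟨ψ, hψ, hψper, hψ0, hψx₀, hψsupp⟩ :=
    exists_periodic_bump hL x₀ hδ' (min_le_right _ _)
  have hshift : ∫ x in (0 : ℝ)..L, g x * ψ x
      = ∫ x in (x₀ - L / 2)..(x₀ - L / 2 + L), g x * ψ x := by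
    simpa using (hper.mul hψper).intervalIntegral_add_eq 0 (x₀ - L / 2)
  have hposint : 0 < ∫ x in (x₀ - L / 2)..(x₀ - L / 2 + L), g x * ψ x := by
    refine intervalIntegral.integral_pos (by linarith) (hg.mul hψ.continuous).continuousOn
      (fun x hx => ?_) ⟨x₀, ⟨by linarith, by linarith⟩, mul_pos hpos hψx₀⟩
    rcases (hψ0 x).lt_or_eq with h | h
    · have hx' : x ∈ Icc (x₀ - L / 2) (x₀ + L / 2) := ⟨hx.1.le, by linarith [hx.2]⟩
      have hclose := (hψsupp x hx' h).trans_le (min_le_left _ _)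
      exact (mul_pos (hball (by rw [Real.dist_eq]; exact hclose)) h).le
    · simp [← h]
  linarith [horth ψ (hψ.of_le (by norm_cast)) hψper]

noncomputable def variationalQuotient (a b K : ℝ) (d r φ : ℝ → ℝ) : ℝ :=
  (∫ x in a..b, φ x ^ 2)⁻¹ * ((∫ x in a..b, d x * |deriv φ x| ^ 2)
    - (∫ x in a..b, r x * φ x ^ 2) - K / ∫ x in a..b, 1 / (d x * φ x ^ 2))

noncomputable def firstVariation (a b K : ℝ) (d r φ ψ : ℝ → ℝ) : ℝ :=
  (∫ x in a..b, φ x ^ 2)⁻¹ * (2 * (∫ x in a..b, d x * deriv φ x * deriv ψ x)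
    - 2 * (∫ x in a..b, r x * φ x * ψ x)
    - 2 * K * (∫ x in a..b, 1 / d x * ψ x / φ x ^ 3) / (∫ x in a..b, 1 / (d x * φ x ^ 2)) ^ 2
    - 2 * (∫ x in a..b, φ x * ψ x) * variationalQuotient a b K d r φ)

theorem hasDerivAt_variationalQuotient_add_mul {a b K : ℝ} {d r φ ψ : ℝ → ℝ} (hab : a < b)
    (hd : ContinuousOn d (uIcc a b)) (hd0 : ∀ x ∈ uIcc a b, 0 < d x)
    (hr : ContinuousOn r (uIcc a b)) (hφ : ContDiff ℝ 1 φ) (hφ0 : ∀ x ∈ uIcc a b, φ x ≠ 0)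
    (hψ : ContDiff ℝ 1 ψ) :
    HasDerivAt (fun ε => variationalQuotient a b K d r (fun x => φ x + ε * ψ x))
      (firstVariation a b K d r φ ψ) 0 := by
  have hφc := hφ.continuous.continuousOn (s := uIcc a b)
  have hψc := hψ.continuous.continuousOn (s := uIcc a b)
  have hdinv : ContinuousOn (fun x => 1 / d x) (uIcc a b) :=
    continuousOn_const.div hd fun x hx => (hd0 x hx).ne'
  have hN := hasDerivAt_integral_mul_add_mul_sq (f := fun _ => 1) continuousOn_const hφc hψc
  have hD := hasDerivAt_integral_mul_add_mul_sq hd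
    (hφ.continuous_deriv le_rfl).continuousOn (hψ.continuous_deriv le_rfl).continuousOn
  have hR := hasDerivAt_integral_mul_add_mul_sq hr hφc hψc
  have hP := hasDerivAt_integral_div_add_mul_sq hdinv hφc hψc hφ0
  simp only [one_mul] at hN
  have hIoo : Ioo a b ⊆ uIcc a b := Ioo_subset_Icc_self.trans Icc_subset_uIcc
  have hN0 : 0 < ∫ x in a..b, φ x ^ 2 := intervalIntegral.intervalIntegral_pos_of_pos_on
    (hφc.pow 2).intervalIntegrable (fun x hx => sq_pos_of_ne_zero (hφ0 x (hIoo hx))) hab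
  have hP0 : 0 < ∫ x in a..b, 1 / d x / φ x ^ 2 :=
    intervalIntegral.intervalIntegral_pos_of_pos_on
      (hdinv.div (hφc.pow 2) fun x hx => pow_ne_zero 2 (hφ0 x hx)).intervalIntegrable
      (fun x hx => div_pos (one_div_pos.mpr (hd0 x (hIoo hx)))
        (sq_pos_of_ne_zero (hφ0 x (hIoo hx)))) hab
  have hderiv : ∀ ε x, deriv (fun x => φ x + ε * ψ x) x = deriv φ x + ε * deriv ψ x :=
    fun ε x => (((hφ.differentiable one_ne_zero) x).hasDerivAt.add
      (((hψ.differentiable one_ne_zero) x).hasDerivAt.const_mul ε)).deriv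
  refine (((hN.fun_inv (by simpa using hN0.ne')).fun_mul ((hD.fun_sub hR).fun_sub
    ((hP.fun_inv (by simpa using hP0.ne')).const_mul K))).congr_deriv ?_).congr_of_eventuallyEq
    (Eventually.of_forall fun ε => ?_)
  · simp only [zero_mul, add_zero, firstVariation, variationalQuotient, div_div, sq_abs]
    field_simp
    ring
  · simp only [variationalQuotient, hderiv, sq_abs, div_div, div_eq_mul_inv K]

theorem variationalQuotient_const {a b K c : ℝ} {d r : ℝ → ℝ} (hc : c ≠ 0) (hab : a ≠ b) :
    variationalQuotient a b K d r (fun _ => c) =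
      -((∫ x in a..b, r x) + K / ∫ x in a..b, 1 / d x) / (b - a) := by
  have hP : ∫ x in a..b, 1 / (d x * c ^ 2) = (∫ x in a..b, 1 / d x) / c ^ 2 := by
    simp only [← intervalIntegral.integral_div, div_div]
  simp only [variationalQuotient, deriv_const', abs_zero, intervalIntegral.integral_const,
    intervalIntegral.integral_mul_const, hP, div_div_eq_mul_div, smul_eq_mul]
  have : b - a ≠ 0 := sub_ne_zero.mpr hab.symm
  field_simp
  ring

theorem firstVariation_const {a b K c : ℝ} {d r ψ : ℝ → ℝ} (hc : c ≠ 0) (hab : a ≠ b) :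
    firstVariation a b K d r (fun _ => c) ψ = 2 / (c * (b - a)) *
      (-(∫ x in a..b, r x * ψ x) - K * (∫ x in a..b, ψ x / d x) / (∫ x in a..b, 1 / d x) ^ 2
        - (∫ x in a..b, ψ x) * variationalQuotient a b K d r (fun _ => c)) := by
  have hP : ∫ x in a..b, 1 / (d x * c ^ 2) = (∫ x in a..b, 1 / d x) / c ^ 2 := by
    simp only [← intervalIntegral.integral_div, div_div]
  have hR : ∫ x in a..b, r x * c * ψ x = c * ∫ x in a..b, r x * ψ x := by
    rw [← intervalIntegral.integral_const_mul]; congr 1; ext x; ring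
  have hS : ∫ x in a..b, 1 / d x * ψ x / c ^ 3 = (∫ x in a..b, ψ x / d x) / c ^ 3 := by
    rw [← intervalIntegral.integral_div]; congr 1; ext x; ring
  simp only [firstVariation, deriv_const', mul_zero, zero_mul, intervalIntegral.integral_zero,
    intervalIntegral.integral_const, intervalIntegral.integral_const_mul, hP, hR, hS, smul_eq_mul]
  have : b - a ≠ 0 := sub_ne_zero.mpr hab.symm
  field_simp
  ring

def IsPeriodicMinimizer (L K : ℝ) (d r φ : ℝ → ℝ) : Prop :=
  ∀ φ' : ℝ → ℝ, ContDiff ℝ 1 φ' → (∀ x, 0 < φ' x) → Periodic φ' L →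
    variationalQuotient 0 L K d r φ ≤ variationalQuotient 0 L K d r φ'

theorem IsPeriodicMinimizer.firstVariation_eq_zero {L K : ℝ} {d r φ ψ : ℝ → ℝ}
    (hmin : IsPeriodicMinimizer L K d r φ) (hL : 0 < L)
    (hd : ContinuousOn d (uIcc 0 L)) (hd0 : ∀ x ∈ uIcc 0 L, 0 < d x)
    (hr : ContinuousOn r (uIcc 0 L)) (hφ : ContDiff ℝ 1 φ) (hφ0 : ∀ x, 0 < φ x)
    (hφper : Periodic φ L) (hψ : ContDiff ℝ 1 ψ) (hψper : Periodic ψ L) :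
    firstVariation 0 L K d r φ ψ = 0 := by
  obtain ⟨m, hm, hφm⟩ := hφper.exists_pos_forall_le hL.ne' hφ.continuous hφ0
  obtain ⟨B, hB⟩ := (hψper.isBounded_of_continuous hL.ne' hψ.continuous).exists_norm_le
  have hsmall := eventually_forall_abs_mul_le (s := univ) (fun x _ => hB (ψ x) ⟨x, rfl⟩)
    (half_pos hm)
  have hlocmin : IsLocalMin
      (fun ε => variationalQuotient 0 L K d r (fun x => φ x + ε * ψ x)) 0 := by
    filter_upwards [hsmall] with ε hε
    simp only [zero_mul, add_zero]
    refine hmin _ (hφ.add (contDiff_const.mul hψ)) (fun x => ?_)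
      (fun x => by simp [hφper x, hψper x])
    linarith [hφm x, neg_abs_le (ε * ψ x), hε x (mem_univ x)]
  exact hlocmin.hasDerivAt_eq_zero (hasDerivAt_variationalQuotient_add_mul (by linarith) hd hd0
    hr hφ (fun x _ => (hφ0 x).ne') hψ)

theorem IsPeriodicMinimizer.integral_eulerLagrange_const {L K c : ℝ} {d r ψ : ℝ → ℝ}
    (hmin : IsPeriodicMinimizer L K d r (fun _ => c)) (hL : 0 < L) (hc : 0 < c)
    (hd : ContinuousOn d (uIcc 0 L)) (hd0 : ∀ x ∈ uIcc 0 L, 0 < d x)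
    (hr : ContinuousOn r (uIcc 0 L)) (hψ : ContDiff ℝ 1 ψ) (hψper : Periodic ψ L) :
    -(∫ x in 0..L, r x * ψ x) - K * (∫ x in 0..L, ψ x / d x) / (∫ x in 0..L, 1 / d x) ^ 2
      - (∫ x in 0..L, ψ x) * variationalQuotient 0 L K d r (fun _ => c) = 0 := by
  have h := hmin.firstVariation_eq_zero hL hd hd0 hr contDiff_const (fun _ => hc)
    (fun _ => rfl) hψ hψper
  rw [firstVariation_const hc.ne' hL.ne] at h
  exact (mul_eq_zero.mp h).resolve_left (by positivity)

theorem IsPeriodicMinimizer.eulerLagrange_const {L K c : ℝ} {d r : ℝ → ℝ}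
    (hmin : IsPeriodicMinimizer L K d r (fun _ => c)) (hL : 0 < L) (hc : 0 < c)
    (hd : Continuous d) (hd0 : ∀ x, 0 < d x) (hdper : Periodic d L)
    (hr : Continuous r) (hrper : Periodic r L) (x : ℝ) :
    r x + K / (∫ x in 0..L, 1 / d x) ^ 2 / d x
      + variationalQuotient 0 L K d r (fun _ => c) = 0 := by
  set I := ∫ x in 0..L, 1 / d x
  set Q := variationalQuotient 0 L K d r (fun _ => c)
  have hdne : ∀ x, d x ≠ 0 := fun x => (hd0 x).ne'
  refine Periodic.eq_zero_of_forall_integral_mul_eq_zero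
    (g := fun x => r x + K / I ^ 2 / d x + Q) hL
    ((hr.add (continuous_const.div hd hdne)).add continuous_const)
    (fun x => by simp only [hrper x, hdper x]) (fun ψ hψ hψper => ?_) x
  have hweak := hmin.integral_eulerLagrange_const hL hc hd.continuousOn (fun x _ => hd0 x)
    hr.continuousOn hψ hψper
  have hsplit : ∀ x, (r x + K / I ^ 2 / d x + Q) * ψ x
      = r x * ψ x + K / I ^ 2 * (ψ x / d x) + Q * ψ x := fun x => by ring
  have hψc := hψ.continuous
  have hψd : Continuous fun x => ψ x / d x := hψc.div hd hdne
  rw [intervalIntegral.integral_congr fun x _ => hsplit x, intervalIntegral.integral_add,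
    intervalIntegral.integral_add, intervalIntegral.integral_const_mul,
    intervalIntegral.integral_const_mul]
  · linear_combination -hweak
  all_goals exact Continuous.intervalIntegrable (by fun_prop) _ _

theorem euler_lagrange_at_constant
    (L : ℝ) (hL : 0 < L)
    (d : ℝ → ℝ) (hd_smooth : ContDiff ℝ 1 d) (hd_pos : ∀ x, 0 < d x)
    (hd_per : Function.Periodic d L)
    (r : ℝ → ℝ) (hr_cont : Continuous r) (hr_per : Function.Periodic r L)
    (rbar dh lam0 : ℝ)
    (hrbar : rbar = (1 / L) * ∫ x in (0:ℝ)..L, r x)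
    (hrbar_pos : 0 < rbar)
    (hdh : dh = L / ∫ x in (0:ℝ)..L, 1 / d x)
    (hlam0 : lam0 = Real.sqrt (rbar / dh))
    (J : (ℝ → ℝ) → ℝ)
    (hJ : ∀ φ : ℝ → ℝ, J φ = (∫ x in (0:ℝ)..L, φ x ^ 2)⁻¹ *
        ((∫ x in (0:ℝ)..L, d x * |deriv φ x| ^ 2)
          - (∫ x in (0:ℝ)..L, r x * φ x ^ 2)
          - lam0 ^ 2 * L ^ 2 / (∫ x in (0:ℝ)..L, 1 / (d x * φ x ^ 2))))
    (φ₀ : ℝ → ℝ) (hφ₀ : φ₀ = fun _ => 1 / Real.sqrt L)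
    (hmin : ∀ φ : ℝ → ℝ, ContDiff ℝ 1 φ → (∀ x, 0 < φ x) →
        Function.Periodic φ L → J φ₀ ≤ J φ) :
    (∀ ψ : ℝ → ℝ, ContDiff ℝ 1 ψ → Function.Periodic ψ L →
        -(∫ x in (0:ℝ)..L, (1 / Real.sqrt L) * r x * ψ x)
          - (lam0 ^ 2 * L ^ 2 / (∫ x in (0:ℝ)..L, L / d x) ^ 2)
              * (∫ x in (0:ℝ)..L, (L * Real.sqrt L / d x) * ψ x)
          = J φ₀ * ∫ x in (0:ℝ)..L, (1 / Real.sqrt L) * ψ x) ∧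
      (∀ x, r x / rbar + dh / d x = 2) := by
  obtain rfl : J = variationalQuotient 0 L (lam0 ^ 2 * L ^ 2) d r := funext hJ
  subst hφ₀
  have hmin : IsPeriodicMinimizer L (lam0 ^ 2 * L ^ 2) d r (fun _ => 1 / √L) := hmin
  have hd := hd_smooth.continuous
  have hI_pos : 0 < ∫ x in (0:ℝ)..L, 1 / d x :=
    intervalIntegral.intervalIntegral_pos_of_pos
      ((continuous_const.div hd fun x => (hd_pos x).ne').intervalIntegrable _ _)
      (fun x => one_div_pos.mpr (hd_pos x)) hL
  have hI : ∫ x in (0:ℝ)..L, 1 / d x = L / dh := by rw [hdh]; field_simp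
  have hdh_pos : 0 < dh := by rw [hdh]; positivity
  have hlam : lam0 ^ 2 = rbar / dh := by rw [hlam0, sq_sqrt (div_pos hrbar_pos hdh_pos).le]
  constructor
  · intro ψ hψ hψper
    have hweak := hmin.integral_eulerLagrange_const hL (by positivity) hd.continuousOn
      (fun x _ => hd_pos x) hr_cont.continuousOn hψ hψper
    simp only [mul_assoc, div_eq_mul_inv, intervalIntegral.integral_const_mul] at hweak ⊢
    field_simp at hweak ⊢
    linear_combination hweak - lam0 ^ 2 * L * (∫ x in (0:ℝ)..L, ψ x / d x) * sq_sqrt hL.le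
  · intro x
    have h := hmin.eulerLagrange_const hL (by positivity) hd hd_pos hd_per hr_cont hr_per x
    have hR : ∫ x in (0:ℝ)..L, r x = L * rbar := by rw [hrbar]; field_simp
    rw [variationalQuotient_const (by positivity) hL.ne, hI, hlam, hR, sub_zero] at h
    field_simp at h ⊢
    linear_combination h
end
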